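/- If H ⊂ 𝓗 is a cyclic closed real subspace (H + iH dense in 𝓗), then the Fock vacuum Ω is cyclic for the polynomial algebra generated by the twisted field operators φ_{L,T}(h), h ∈ H: for every n, the closure of {QΩ : Q a polynomial of degree ≤ n in the fields} contains ⊕_{k=0}^n H_{T,k}. -/

import Mathlib

/-!
STATEMENT 19: If `H ⊂ 𝓗` is a cyclic closed real subspace (`H + iH` dense),
then the Fock vacuum `Ω` is cyclic for the polynomial algebra generated by the
twisted fields `φ_{L,T}(h)`, `h ∈ H`: for every `n`, the closure of
`{QΩ : Q polynomial of degree ≤ n in the fields}` contains `⊕_{k=0}^n H_{T,k}`.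

Setting: `V k` are the twisted `k`-particle spaces `H_{T,k}`, isometrically
embedded in the twisted Fock space `𝓕` by `en k`, with mutually orthogonal
ranges; `Ω = en 0 vac`; `tens k ξ v = [ξ ⊗ v]` is the (continuous, bilinear)
twisted tensor multiplication, whose iterates on arbitrary one-particle
vectors are total in each `V k` (`htotal`); the field `φ h` applied to a
`k`-particle vector is `[h ⊗ ·]` plus terms of particle number `≤ k`
(`hφ_action`), reflecting `[φ(h₁)⋯φ(h_k)Ω]_k = [h₁⊗…⊗h_k]`.  The space of
vectors `QΩ` with `Q` a field polynomial of degree `≤ n` is `polyVac n`.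
-/

noncomputable section

/-- the iterated elementary tensors `ξ₁ ⊗ ⋯ ⊗ ξ_k ∈ V k` with factors from `S`. -/
def elemTens {𝓗 : Type*} {V : ℕ → Type*} (vac : V 0)
    (tens : ∀ k, 𝓗 → V k → V (k + 1)) (S : Set 𝓗) : ∀ k, Set (V k)
  | 0 => {vac}
  | k + 1 => {w | ∃ ξ ∈ S, ∃ v ∈ elemTens vac tens S k, w = tens k ξ v}

/-- vectors `QΩ`, `Q` a polynomial of degree `≤ n` in the fields `φ h`, `h ∈ H`. -/
def polyVac {𝓗 𝓕 : Type*} [NormedAddCommGroup 𝓗] [InnerProductSpace ℂ 𝓗]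
    [NormedAddCommGroup 𝓕] [InnerProductSpace ℂ 𝓕]
    (H : Submodule ℝ 𝓗) (φ : 𝓗 → 𝓕 → 𝓕) (Ω : 𝓕) : ℕ → Submodule ℂ 𝓕
  | 0 => Submodule.span ℂ {Ω}
  | n + 1 => polyVac H φ Ω n ⊔
      Submodule.span ℂ {w | ∃ h ∈ H, ∃ x ∈ polyVac H φ Ω n, w = φ h x}

/-!
Induction on the particle number. Up to particle numbers `≤ k`, the field `φ(h)` acts on a
`k`-particle vector as `[h ⊗ ·]`, so `[h₁ ⊗ ⋯ ⊗ h_k] = φ(h₁)⋯φ(h_k)Ω` modulo `⊕_{j<k} H_{T,j}`,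
which by induction lies in the closure of the field polynomials of degree `< k`. Since
`span_ℂ H` is dense and `⊗` is continuous and bilinear, the elementary tensors with factors
in `H` are already total in `H_{T,k}`, and the isometry `H_{T,k} → 𝓕` carries their closed
span into the closure of the polynomials of degree `≤ k`.
-/

open Set Submodule

section Tensors

variable {R E F G : Type*} [CommSemiring R]
  [AddCommMonoid E] [Module R E] [TopologicalSpace E]
  [AddCommMonoid F] [Module R F] [TopologicalSpace F]
  [AddCommMonoid G] [Module R G] [TopologicalSpace G]

theorem LinearMap.apply_mem_closure_span_image2 (B : E →ₗ[R] F →ₗ[R] G)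
    (hB₁ : ∀ x, Continuous (B x)) (hB₂ : ∀ y, Continuous fun x => B x y)
    {s : Set E} {t : Set F} {x : E} {y : F}
    (hx : x ∈ closure (span R s : Set E)) (hy : y ∈ closure (span R t : Set F)) :
    B x y ∈ closure (span R (image2 (fun a b => B a b) s t) : Set G) := by
  refine map_mem_closure₂' (f := fun a b => B a b) hB₁ hB₂ hx hy fun a ha b hb => ?_
  rw [SetLike.mem_coe, ← map₂_span_span]
  exact apply_mem_map₂ B ha hb

theorem elemTens_succ {E : Type*} {V : ℕ → Type*} (vac : V 0) (tens : ∀ k, E → V k → V (k + 1)) (S : Set E)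
    (k : ℕ) : elemTens vac tens S (k + 1) = image2 (tens k) S (elemTens vac tens S k) := by
  ext
  simp [elemTens, eq_comm]

variable {V : ℕ → Type*} [∀ k, AddCommMonoid (V k)] [∀ k, Module R (V k)]
  [∀ k, TopologicalSpace (V k)]

theorem elemTens_subset_closure_span (vac : V 0) (B : ∀ k, E →ₗ[R] V k →ₗ[R] V (k + 1))
    (hB₁ : ∀ k x, Continuous (B k x)) (hB₂ : ∀ k v, Continuous fun x => B k x v)
    {S T : Set E} (hTS : T ⊆ closure (span R S : Set E)) :
    ∀ k, elemTens vac (fun k x v => B k x v) T k ⊆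
      closure (span R (elemTens vac (fun k x v => B k x v) S k) : Set (V k))
  | 0 => singleton_subset_iff.2 (subset_closure (subset_span rfl))
  | k + 1 => by
    rw [elemTens_succ, elemTens_succ]
    rintro _ ⟨x, hx, v, hv, rfl⟩
    exact (B k).apply_mem_closure_span_image2 (hB₁ k) (hB₂ k) (hTS hx)
      (elemTens_subset_closure_span vac B hB₁ hB₂ hTS k hv)

theorem dense_span_elemTens [∀ k, ContinuousAdd (V k)] [∀ k, ContinuousConstSMul R (V k)]
    (vac : V 0) (B : ∀ k, E →ₗ[R] V k →ₗ[R] V (k + 1))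
    (hB₁ : ∀ k x, Continuous (B k x)) (hB₂ : ∀ k v, Continuous fun x => B k x v)
    {S : Set E} (hS : Dense (span R S : Set E)) {k : ℕ}
    (htotal : Dense (span R (elemTens vac (fun k x v => B k x v) univ k) : Set (V k))) :
    Dense (span R (elemTens vac (fun k x v => B k x v) S k) : Set (V k)) := by
  have hspan : span R (elemTens vac (fun k x v => B k x v) univ k) ≤
      (span R (elemTens vac (fun k x v => B k x v) S k)).topologicalClosure :=
    span_le.2 (elemTens_subset_closure_span vac B hB₁ hB₂ (fun x _ => hS x) k)
  rw [dense_iff_topologicalClosure_eq_top] at htotal ⊢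
  exact eq_top_iff.2 <| htotal ▸ topologicalClosure_minimal _ hspan (isClosed_topologicalClosure _)

end Tensors

section Fock

variable {𝓕 : Type*} [NormedAddCommGroup 𝓕] [NormedSpace ℂ 𝓕]
  {V : ℕ → Type*} [∀ k, NormedAddCommGroup (V k)] [∀ k, NormedSpace ℂ (V k)]
  (en : ∀ k, V k →ₗᵢ[ℂ] 𝓕)

/-- `⊕_{j<k} H_{T,j}` as a subspace of `𝓕`. -/
def particlesBelow (k : ℕ) : Submodule ℂ 𝓕 :=
  ⨆ j ∈ Finset.range k, LinearMap.range (en j).toLinearMap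

theorem particlesBelow_zero : particlesBelow en 0 = ⊥ := by
  simp [particlesBelow]

theorem particlesBelow_succ (k : ℕ) :
    particlesBelow en (k + 1) = particlesBelow en k ⊔ LinearMap.range (en k).toLinearMap := by
  simp only [particlesBelow, Finset.range_add_one, Finset.iSup_insert, sup_comm]

theorem particlesBelow_mono : Monotone (particlesBelow en) :=
  monotone_nat_of_le_succ fun k => (particlesBelow_succ en k).ge.trans' le_sup_left

theorem range_le_particlesBelow {j k : ℕ} (h : j < k) :
    LinearMap.range (en j).toLinearMap ≤ particlesBelow en k :=
  ((particlesBelow_succ en j).ge.trans' le_sup_right).trans (particlesBelow_mono en h)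

theorem apply_mem_particlesBelow_succ {f : 𝓕 → 𝓕} (hf : IsLinearMap ℂ f)
    {T : ∀ k, V k → V (k + 1)}
    (hraise : ∀ k (v : V k), ∃ y ∈ particlesBelow en (k + 1), f (en k v) = en (k + 1) (T k v) + y)
    (k : ℕ) : ∀ y ∈ particlesBelow en k, f y ∈ particlesBelow en (k + 1) := by
  suffices particlesBelow en k ≤ (particlesBelow en (k + 1)).comap (hf.mk' f) from
    fun y hy => this hy
  refine iSup₂_le fun j hj => ?_
  rintro _ ⟨v, rfl⟩
  obtain ⟨y, hy, hfv⟩ := hraise j v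
  have hjk : j + 1 < k + 1 := by simpa using hj
  show f (en j v) ∈ particlesBelow en (k + 1)
  rw [hfv]
  exact add_mem (range_le_particlesBelow en hjk ⟨_, rfl⟩) (particlesBelow_mono en hjk.le hy)

theorem range_le_topologicalClosure {P : Submodule ℂ 𝓕} {n : ℕ} {S : Set (V n)}
    (hS : Dense (span ℂ S : Set (V n))) (hSP : ∀ w ∈ S, en n w ∈ P ⊔ particlesBelow en n)
    (hlow : particlesBelow en n ≤ P.topologicalClosure) :
    LinearMap.range (en n).toLinearMap ≤ P.topologicalClosure := by
  have hspan : span ℂ S ≤ P.topologicalClosure.comap (en n).toLinearMap :=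
    span_le.2 fun w hw => sup_le P.le_topologicalClosure hlow (hSP w hw)
  have hclosed : IsClosed (P.topologicalClosure.comap (en n).toLinearMap : Set (V n)) :=
    P.isClosed_topologicalClosure.preimage (en n).continuous
  rw [LinearMap.range_le_iff_comap, eq_top_iff, ← dense_iff_topologicalClosure_eq_top.1 hS]
  exact topologicalClosure_minimal _ hspan hclosed

theorem particlesBelow_le_topologicalClosure {P : ℕ → Submodule ℂ 𝓕} (hP : Monotone P)
    {S : ∀ k, Set (V k)} (hS : ∀ k, Dense (span ℂ (S k) : Set (V k)))
    (hSP : ∀ k, ∀ w ∈ S k, en k w ∈ P k ⊔ particlesBelow en k) :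
    ∀ n, particlesBelow en n ≤ (P n).topologicalClosure
  | 0 => by simp [particlesBelow_zero]
  | n + 1 => by
    have ih := particlesBelow_le_topologicalClosure hP hS hSP n
    rw [particlesBelow_succ]
    exact (sup_le ih (range_le_topologicalClosure en (hS n) (hSP n) ih)).trans
      (topologicalClosure_mono (hP n.le_succ))

end Fock

section FieldPolynomials

variable {𝓗 𝓕 : Type*} [NormedAddCommGroup 𝓗] [InnerProductSpace ℂ 𝓗]
  [NormedAddCommGroup 𝓕] [InnerProductSpace ℂ 𝓕]
  (H : Submodule ℝ 𝓗) (φ : 𝓗 → 𝓕 → 𝓕) (Ω : 𝓕)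

theorem polyVac_mono : Monotone (polyVac H φ Ω) :=
  monotone_nat_of_le_succ fun _ => le_sup_left

theorem apply_mem_polyVac_succ {h : 𝓗} (hh : h ∈ H) {n : ℕ} {x : 𝓕}
    (hx : x ∈ polyVac H φ Ω n) : φ h x ∈ polyVac H φ Ω (n + 1) :=
  mem_sup_right (subset_span ⟨h, hh, x, hx, rfl⟩)

theorem en_mem_polyVac_sup_particlesBelow
    {V : ℕ → Type*} [∀ k, NormedAddCommGroup (V k)] [∀ k, InnerProductSpace ℂ (V k)]
    (en : ∀ k, V k →ₗᵢ[ℂ] 𝓕) {vac : V 0} (hΩ : Ω = en 0 vac)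
    {tens : ∀ k, 𝓗 → V k → V (k + 1)} (hφ_lin : ∀ h ∈ H, IsLinearMap ℂ (φ h))
    (hφ_action : ∀ h ∈ H, ∀ k (v : V k),
      ∃ y ∈ particlesBelow en (k + 1), φ h (en k v) = en (k + 1) (tens k h v) + y) :
    ∀ k, ∀ w ∈ elemTens vac tens (H : Set 𝓗) k, en k w ∈ polyVac H φ Ω k ⊔ particlesBelow en k
  | 0, _, rfl => hΩ ▸ mem_sup_left (mem_span_singleton_self Ω)
  | k + 1, _, ⟨h, hh, v, hv, rfl⟩ => by
    obtain ⟨p, hp, y, hy, hpy⟩ :=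
      mem_sup.1 (en_mem_polyVac_sup_particlesBelow en hΩ hφ_lin hφ_action k v hv)
    obtain ⟨y', hy', hφv⟩ := hφ_action h hh k v
    rw [← hpy, (hφ_lin h hh).map_add] at hφv
    rw [eq_sub_of_add_eq hφv.symm]
    refine sub_mem (add_mem (mem_sup_left (apply_mem_polyVac_succ H φ Ω hh hp)) ?_)
      (mem_sup_right hy')
    exact mem_sup_right
      (apply_mem_particlesBelow_succ en (hφ_lin h hh) (hφ_action h hh) k y hy)

end FieldPolynomials

theorem vacuum_cyclic_for_field_polynomials_general
    {𝓗 𝓕 : Type*}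
    [NormedAddCommGroup 𝓗] [InnerProductSpace ℂ 𝓗]
    [NormedAddCommGroup 𝓕] [InnerProductSpace ℂ 𝓕]
    (V : ℕ → Type*) [∀ k, NormedAddCommGroup (V k)] [∀ k, InnerProductSpace ℂ (V k)]
    (en : ∀ k, V k →ₗᵢ[ℂ] 𝓕)
    (vac : V 0) (Ω : 𝓕) (hΩ : Ω = en 0 vac)
    (H : Submodule ℝ 𝓗)
    (hcyclic : Dense ((Submodule.span ℂ (H : Set 𝓗) : Submodule ℂ 𝓗) : Set 𝓗))
    (tens : ∀ k, 𝓗 → V k → V (k + 1))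
    (htens_cont : ∀ k, Continuous fun p : 𝓗 × V k => tens k p.1 p.2)
    (htens_addl : ∀ k (ξ ξ' : 𝓗) (v : V k), tens k (ξ + ξ') v = tens k ξ v + tens k ξ' v)
    (htens_addr : ∀ k (ξ : 𝓗) (v v' : V k), tens k ξ (v + v') = tens k ξ v + tens k ξ v')
    (htens_smul : ∀ k (c : ℂ) (ξ : 𝓗) (v : V k),
      tens k (c • ξ) v = c • tens k ξ v ∧ tens k ξ (c • v) = c • tens k ξ v)
    (htotal : ∀ k,
      Dense ((Submodule.span ℂ (elemTens vac tens (Set.univ : Set 𝓗) k) : Submodule ℂ (V k)) : Set (V k)))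
    (φ : 𝓗 → 𝓕 → 𝓕)
    (hφ_action : ∀ h ∈ H, ∀ k (v : V k),
      ∃ y ∈ (⨆ j ∈ Finset.range (k + 1), LinearMap.range ((en j).toLinearMap) : Submodule ℂ 𝓕),
        φ h (en k v) = en (k + 1) (tens k h v) + y)
    (hφ_add : ∀ h ∈ H, ∀ x y : 𝓕, φ h (x + y) = φ h x + φ h y)
    (hφ_smul : ∀ h ∈ H, ∀ (c : ℂ) (x : 𝓕), φ h (c • x) = c • φ h x) :
    ∀ n, ∀ k ≤ n, ∀ v : V k, en k v ∈ closure ((polyVac H φ Ω n : Submodule ℂ 𝓕) : Set 𝓕) := by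
  intro n k hk v
  let B k : 𝓗 →ₗ[ℂ] V k →ₗ[ℂ] V (k + 1) :=
    LinearMap.mk₂ ℂ (tens k) (htens_addl k) (fun c ξ v => (htens_smul k c ξ v).1)
      (htens_addr k) (fun c ξ v => (htens_smul k c ξ v).2)
  have hdense (k : ℕ) : Dense (span ℂ (elemTens vac tens (H : Set 𝓗) k) : Set (V k)) :=
    dense_span_elemTens vac B (fun k => (htens_cont k).uncurry_left (f := tens k))
      (fun k => (htens_cont k).uncurry_right (f := tens k)) hcyclic (htotal k)
  have hmem := en_mem_polyVac_sup_particlesBelow H φ Ω en hΩ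
    (fun h hh => ⟨hφ_add h hh, hφ_smul h hh⟩) hφ_action
  have hlow := particlesBelow_le_topologicalClosure en (polyVac_mono H φ Ω) hdense hmem
  exact closure_mono (polyVac_mono H φ Ω hk)
    (range_le_topologicalClosure en (hdense k) (hmem k) (hlow k) ⟨v, rfl⟩)

/-- For cyclic `H`, the vacuum is cyclic for the field
polynomials: `closure {QΩ : deg Q ≤ n} ⊇ ⊕_{k≤n} H_{T,k}`. -/
theorem vacuum_cyclic_for_field_polynomials
    {𝓗 𝓕 : Type*}
    [NormedAddCommGroup 𝓗] [InnerProductSpace ℂ 𝓗] [CompleteSpace 𝓗]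
    [NormedAddCommGroup 𝓕] [InnerProductSpace ℂ 𝓕] [CompleteSpace 𝓕]
    (V : ℕ → Type*) [∀ k, NormedAddCommGroup (V k)] [∀ k, InnerProductSpace ℂ (V k)]
    (en : ∀ k, V k →ₗᵢ[ℂ] 𝓕)
    (horth : ∀ j k, j ≠ k → ∀ (v : V j) (w : V k), (inner ℂ (en j v) (en k w) : ℂ) = 0)
    (vac : V 0) (Ω : 𝓕) (hΩ : Ω = en 0 vac)
    (H : Submodule ℝ 𝓗)
    (hcyclic : Dense ((Submodule.span ℂ (H : Set 𝓗) : Submodule ℂ 𝓗) : Set 𝓗))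
    (tens : ∀ k, 𝓗 → V k → V (k + 1))
    (htens_cont : ∀ k, Continuous fun p : 𝓗 × V k => tens k p.1 p.2)
    (htens_addl : ∀ k (ξ ξ' : 𝓗) (v : V k), tens k (ξ + ξ') v = tens k ξ v + tens k ξ' v)
    (htens_addr : ∀ k (ξ : 𝓗) (v v' : V k), tens k ξ (v + v') = tens k ξ v + tens k ξ v')
    (htens_smul : ∀ k (c : ℂ) (ξ : 𝓗) (v : V k),
      tens k (c • ξ) v = c • tens k ξ v ∧ tens k ξ (c • v) = c • tens k ξ v)
    (htotal : ∀ k,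
      Dense ((Submodule.span ℂ (elemTens vac tens (Set.univ : Set 𝓗) k) : Submodule ℂ (V k)) : Set (V k)))
    (φ : 𝓗 → 𝓕 → 𝓕)
    (hφ_action : ∀ h ∈ H, ∀ k (v : V k),
      ∃ y ∈ (⨆ j ∈ Finset.range (k + 1), LinearMap.range ((en j).toLinearMap) : Submodule ℂ 𝓕),
        φ h (en k v) = en (k + 1) (tens k h v) + y)
    (hφ_add : ∀ h ∈ H, ∀ x y : 𝓕, φ h (x + y) = φ h x + φ h y)
    (hφ_smul : ∀ h ∈ H, ∀ (c : ℂ) (x : 𝓕), φ h (c • x) = c • φ h x) :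
    ∀ n, ∀ k ≤ n, ∀ v : V k, en k v ∈ closure ((polyVac H φ Ω n : Submodule ℂ 𝓕) : Set 𝓕) :=
  vacuum_cyclic_for_field_polynomials_general V en vac Ω hΩ H hcyclic tens htens_cont htens_addl
    htens_addr htens_smul htotal φ hφ_action hφ_add hφ_smul
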